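/- arXiv:1312.7639 — 2 statements merged into one kernel-verified Lean document; each statement's English description precedes it below -/
import Mathlib

section
/- Let n ≥ 2, x' ∈ ℝ^{n-1}, ξ' ∈ ℝ^{n-1}, ξₙ, σ, xₙ, X ∈ ℝ, and set g = x'·ξ', f = 1 + 4|x'|². Define a = |ξ'|² + 4 g ξₙ + f ξₙ² − f (xₙ−X)² σ² and b = 4 g (xₙ−X)|σ| + 2 f ξₙ (xₙ−X)|σ|. Then the Poisson bracket {a, b} := Σ_{j=1}^{n} (∂_{ξ_j} a · ∂_{x_j} b − ∂_{x_j} a · ∂_{ξ_j} b), where x = (x', xₙ) and ξ = (ξ', ξₙ), equals 8(xₙ−X)|σ||ξ'|² + 32 g ξₙ (xₙ−X)|σ| + 32|x'|² ξₙ² (xₙ−X)|σ| + 16 g² |σ| + 16 f g ξₙ |σ| + 4 f² ξₙ² |σ| + 32|x'|²(xₙ−X)³|σ|³ + 4 f² (xₙ−X)²|σ|³. -/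
open Function

/-- Derivative of a function that is (globally) a quadratic polynomial. -/
lemma deriv_quad (F : ℝ → ℝ) (A B t : ℝ)
    (h : ∀ s, F s - F 0 = A * s ^ 2 + B * s) : deriv F t = 2 * A * t + B := by
  have h' : F = fun s => A * s ^ 2 + B * s + F 0 := by
    funext s
    have := h s
    ring_nf
    ring_nf at this
    linarith
  have h3 : HasDerivAt (fun s : ℝ => A * s ^ 2 + B * s + F 0)
      (A * (2 * t ^ 1) + B * 1) t :=
    (((hasDerivAt_pow 2 t).const_mul A).add ((hasDerivAt_id t).const_mul B)).add_const (F 0)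
  have h4 : HasDerivAt F (A * (2 * t ^ 1) + B * 1) t := by
    rw [h']; exact h3
  have := h4.deriv
  rw [this]; ring

lemma sum_update_sq {m : ℕ} (v : Fin m → ℝ) (j : Fin m) (s : ℝ) :
    ∑ i, (update v j s i) ^ 2 = (∑ i, (v i) ^ 2) - (v j) ^ 2 + s ^ 2 := by
  have h : ∀ i, (update v j s i) ^ 2 = update (fun k => (v k) ^ 2) j (s ^ 2) i :=
    fun i => (apply_update (fun _ x => x ^ 2) v j s i)
  simp_rw [h]
  rw [Finset.sum_update_of_mem (Finset.mem_univ j),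
    Finset.sdiff_singleton_eq_erase, Finset.sum_erase_eq_sub (Finset.mem_univ j)]
  ring

lemma sum_update_mul_right {m : ℕ} (w v : Fin m → ℝ) (j : Fin m) (s : ℝ) :
    ∑ i, w i * (update v j s i) = (∑ i, w i * v i) - w j * v j + w j * s := by
  have h : ∀ i, w i * (update v j s i) = update (fun k => w k * v k) j (w j * s) i :=
    fun i => (apply_update (fun k x => w k * x) v j s i)
  simp_rw [h]
  rw [Finset.sum_update_of_mem (Finset.mem_univ j),
    Finset.sdiff_singleton_eq_erase, Finset.sum_erase_eq_sub (Finset.mem_univ j)]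
  ring

lemma sum_update_mul_left {m : ℕ} (w v : Fin m → ℝ) (j : Fin m) (s : ℝ) :
    ∑ i, (update v j s i) * w i = (∑ i, v i * w i) - v j * w j + s * w j := by
  have h : ∀ i, (update v j s i) * w i = update (fun k => v k * w k) j (s * w j) i :=
    fun i => (apply_update (fun k x => x * w k) v j s i)
  simp_rw [h]
  rw [Finset.sum_update_of_mem (Finset.mem_univ j),
    Finset.sdiff_singleton_eq_erase, Finset.sum_erase_eq_sub (Finset.mem_univ j)]
  ring

open Function in
/-- the Poisson bracket `{a, b}` of the real and imaginary parts
(`τ`-independent parts) of the conjugated principal symbol equals the stated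
explicit expression. -/
theorem poisson_bracket_symbol (n : ℕ) (hn : 2 ≤ n) (X σ : ℝ)
    (x' ξ' : Fin (n - 1) → ℝ) (xn ξn : ℝ) :
    let a : (Fin (n - 1) → ℝ) → ℝ → (Fin (n - 1) → ℝ) → ℝ → ℝ := fun y yn η ηn =>
      (∑ j, (η j) ^ 2) + 4 * (∑ j, y j * η j) * ηn
        + (1 + 4 * ∑ j, (y j) ^ 2) * ηn ^ 2
        - (1 + 4 * ∑ j, (y j) ^ 2) * (yn - X) ^ 2 * σ ^ 2
    let b : (Fin (n - 1) → ℝ) → ℝ → (Fin (n - 1) → ℝ) → ℝ → ℝ := fun y yn η ηn =>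
      4 * (∑ j, y j * η j) * (yn - X) * |σ|
        + 2 * (1 + 4 * ∑ j, (y j) ^ 2) * ηn * (yn - X) * |σ|
    let g : ℝ := ∑ j, x' j * ξ' j
    let f : ℝ := 1 + 4 * ∑ j, (x' j) ^ 2
    (∑ j, (deriv (fun s => a x' xn (update ξ' j s) ξn) (ξ' j)
            * deriv (fun s => b (update x' j s) xn ξ' ξn) (x' j)
          - deriv (fun s => a (update x' j s) xn ξ' ξn) (x' j)
            * deriv (fun s => b x' xn (update ξ' j s) ξn) (ξ' j)))
      + (deriv (fun s => a x' xn ξ' s) ξn * deriv (fun s => b x' s ξ' ξn) xn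
         - deriv (fun s => a x' s ξ' ξn) xn * deriv (fun s => b x' xn ξ' s) ξn)
    = 8 * (xn - X) * |σ| * (∑ j, (ξ' j) ^ 2) + 32 * g * ξn * (xn - X) * |σ|
      + 32 * (∑ j, (x' j) ^ 2) * ξn ^ 2 * (xn - X) * |σ|
      + 16 * g ^ 2 * |σ| + 16 * f * g * ξn * |σ| + 4 * f ^ 2 * ξn ^ 2 * |σ|
      + 32 * (∑ j, (x' j) ^ 2) * (xn - X) ^ 3 * |σ| ^ 3
      + 4 * f ^ 2 * (xn - X) ^ 2 * |σ| ^ 3 := by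
  intro a b g f
  have h1 : ∀ j, deriv (fun s => a x' xn (update ξ' j s) ξn) (ξ' j)
      = 2 * 1 * ξ' j + 4 * x' j * ξn := by
    intro j
    apply deriv_quad
    intro s
    simp only [a, sum_update_sq, sum_update_mul_right]
    ring
  have h2 : ∀ j, deriv (fun s => b (update x' j s) xn ξ' ξn) (x' j)
      = 2 * (8 * ξn * (xn - X) * |σ|) * x' j + 4 * ξ' j * (xn - X) * |σ| := by
    intro j
    apply deriv_quad
    intro s
    simp only [b, sum_update_sq, sum_update_mul_left]
    ring
  have h3 : ∀ j, deriv (fun s => a (update x' j s) xn ξ' ξn) (x' j)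
      = 2 * (4 * ξn ^ 2 - 4 * (xn - X) ^ 2 * σ ^ 2) * x' j + 4 * ξ' j * ξn := by
    intro j
    apply deriv_quad
    intro s
    simp only [a, sum_update_sq, sum_update_mul_left]
    ring
  have h4 : ∀ j, deriv (fun s => b x' xn (update ξ' j s) ξn) (ξ' j)
      = 2 * 0 * ξ' j + 4 * x' j * (xn - X) * |σ| := by
    intro j
    apply deriv_quad
    intro s
    simp only [b, sum_update_sq, sum_update_mul_right]
    ring
  have h5 : deriv (fun s => a x' xn ξ' s) ξn = 2 * f * ξn + 4 * g := by
    apply deriv_quad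
    intro s
    simp only [a, f, g]
    ring
  have h6 : deriv (fun s => b x' s ξ' ξn) xn
      = 2 * 0 * xn + (4 * g * |σ| + 2 * f * ξn * |σ|) := by
    apply deriv_quad
    intro s
    simp only [b, f, g]
    ring
  have h7 : deriv (fun s => a x' s ξ' ξn) xn
      = 2 * (-(f * σ ^ 2)) * xn + 2 * f * X * σ ^ 2 := by
    apply deriv_quad
    intro s
    simp only [a, f]
    ring
  have h8 : deriv (fun s => b x' xn ξ' s) ξn
      = 2 * 0 * ξn + 2 * f * (xn - X) * |σ| := by
    apply deriv_quad
    intro s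
    simp only [b, f]
    ring
  simp only [h1, h2, h3, h4, h5, h6, h7, h8]
  have hsum : ∑ j, ((2 * 1 * ξ' j + 4 * x' j * ξn)
        * (2 * (8 * ξn * (xn - X) * |σ|) * x' j + 4 * ξ' j * (xn - X) * |σ|)
      - (2 * (4 * ξn ^ 2 - 4 * (xn - X) ^ 2 * σ ^ 2) * x' j + 4 * ξ' j * ξn)
        * (2 * 0 * ξ' j + 4 * x' j * (xn - X) * |σ|))
      = (8 * (xn - X) * |σ|) * (∑ j, (ξ' j) ^ 2)
        + (32 * ξn * (xn - X) * |σ|) * (∑ j, x' j * ξ' j)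
        + (32 * ξn ^ 2 * (xn - X) * |σ| + 32 * (xn - X) ^ 3 * σ ^ 2 * |σ|)
          * (∑ j, (x' j) ^ 2) := by
    rw [Finset.mul_sum, Finset.mul_sum, Finset.mul_sum, ← Finset.sum_add_distrib,
      ← Finset.sum_add_distrib]
    apply Finset.sum_congr rfl
    intro j _
    ring
  rw [hsum]
  rw [← sq_abs σ]
  ring
end

section
/- Let h(β) = (1+β²)^{1/4}. Then for every j, k ∈ ℕ there exist constants C, β₀ > 0 such that for all β ≥ β₀ and σ ∈ ℝ: |h(σ+β)^j (σ+β)^k − h(β)^j β^k| ≤ C h(β)^j β^k (h(β)^{-1} + β^{-1}) (1+σ²)^{(j+k+2)/2}. -/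
/-!
Write `⟨σ⟩ = √(1 + σ²)`. Dividing by `h(β)^j β^k` reduces the claim to bounding `|p^j q^k - 1|`
for `p = h(σ+β)/h(β)` and `q = (σ+β)/β`. Peetre's inequality gives `p, q ≤ 2⟨σ⟩`, and
`h(σ+β)⁴ - h(β)⁴ = σ(σ+2β)` gives `|p - 1| ≤ 3⟨σ⟩²/h(β)`, while `|q - 1| = |σ|/β`.
Telescoping, `|p^j q^k - 1| ≤ (j+k) M^(j+k) (|p - 1| + |q - 1|)` whenever `|p|, |q| ≤ M` and `1 ≤ M`.
-/

open Real

lemma abs_pow_sub_one_le {p M : ℝ} (hp : |p| ≤ M) (hM : 1 ≤ M) (n : ℕ) :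
    |p ^ n - 1| ≤ n * M ^ n * |p - 1| := by
  have hmax : max |p| |1| ≤ M := max_le hp (by simpa using hM)
  calc |p ^ n - 1| = |p ^ n - 1 ^ n| := by rw [one_pow]
    _ ≤ |p - 1| * n * max |p| |1| ^ (n - 1) := abs_pow_sub_pow_le ..
    _ ≤ |p - 1| * n * M ^ n := by
      gcongr
      exact (pow_le_pow_left₀ (abs_nonneg _ |>.trans (le_max_left _ _)) hmax _).trans
        (pow_le_pow_right₀ hM (Nat.sub_le n 1))
    _ = n * M ^ n * |p - 1| := by ring

lemma abs_pow_mul_pow_sub_one_le {p q M : ℝ} (hp : |p| ≤ M) (hq : |q| ≤ M) (hM : 1 ≤ M)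
    (j k : ℕ) : |p ^ j * q ^ k - 1| ≤ (j + k) * M ^ (j + k) * (|p - 1| + |q - 1|) := by
  have hM₀ : 0 ≤ M := zero_le_one.trans hM
  have hMj : M ^ j ≤ M ^ (j + k) := pow_le_pow_right₀ hM (Nat.le_add_right j k)
  have hMk : M ^ k ≤ M ^ (j + k) := pow_le_pow_right₀ hM (Nat.le_add_left k j)
  calc |p ^ j * q ^ k - 1| = |(p ^ j - 1) * q ^ k + (q ^ k - 1)| := by ring_nf
    _ ≤ |p ^ j - 1| * |q| ^ k + |q ^ k - 1| := by
      rw [← abs_pow, ← abs_mul]; exact abs_add_le _ _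
    _ ≤ j * M ^ j * |p - 1| * M ^ k + k * M ^ k * |q - 1| := by
      gcongr
      · exact abs_pow_sub_one_le hp hM j
      · exact abs_pow_sub_one_le hq hM k
    _ ≤ j * M ^ (j + k) * |p - 1| + k * M ^ (j + k) * |q - 1| := by
      rw [mul_right_comm _ |p - 1|, mul_assoc _ (M ^ j), ← pow_add]
      gcongr
    _ ≤ (j + k) * M ^ (j + k) * (|p - 1| + |q - 1|) := by
      have hMjk : 0 ≤ M ^ (j + k) := pow_nonneg hM₀ _
      nlinarith [mul_nonneg (mul_nonneg (Nat.cast_nonneg j) hMjk) (abs_nonneg (q - 1)),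
        mul_nonneg (mul_nonneg (Nat.cast_nonneg k) hMjk) (abs_nonneg (p - 1))]

lemma abs_sub_mul_pow_three_le {u v : ℝ} (hu : 0 ≤ u) (hv : 0 ≤ v) :
    |u - v| * v ^ 3 ≤ |u ^ 4 - v ^ 4| := by
  rw [show u ^ 4 - v ^ 4 = (u - v) * (u ^ 3 + u ^ 2 * v + u * v ^ 2 + v ^ 3) by ring, abs_mul,
    abs_of_nonneg (by positivity : 0 ≤ u ^ 3 + u ^ 2 * v + u * v ^ 2 + v ^ 3)]
  gcongr
  nlinarith [pow_nonneg hu 3, mul_nonneg (pow_nonneg hu 2) hv, mul_nonneg hu (pow_nonneg hv 2)]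

/-- The paper's `h`. -/
noncomputable def weight (x : ℝ) : ℝ := (1 + x ^ 2) ^ ((1 : ℝ) / 4)

lemma weight_pow_four (x : ℝ) : weight x ^ 4 = 1 + x ^ 2 := by
  rw [weight, one_div]
  exact_mod_cast rpow_inv_natCast_pow (by positivity) four_ne_zero

lemma one_le_weight (x : ℝ) : 1 ≤ weight x :=
  one_le_rpow (by nlinarith [sq_nonneg x]) (by norm_num)

lemma weight_nonneg (x : ℝ) : 0 ≤ weight x := zero_le_one.trans (one_le_weight x)

lemma abs_le_weight_sq (x : ℝ) : |x| ≤ weight x ^ 2 :=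
  le_of_pow_le_pow_left₀ two_ne_zero (sq_nonneg _) <| by
    rw [sq_abs, ← pow_mul, weight_pow_four]; linarith

lemma weight_add_le (x y : ℝ) : weight (x + y) ≤ 2 * √(1 + x ^ 2) * weight y := by
  have hw : √(1 + x ^ 2) ^ 2 = 1 + x ^ 2 := sq_sqrt (by positivity)
  have hw₁ : 1 ≤ √(1 + x ^ 2) ^ 2 := by rw [hw]; nlinarith [sq_nonneg x]
  refine le_of_pow_le_pow_left₀ four_ne_zero
    (mul_nonneg (by positivity) (weight_nonneg y)) ?_
  calc weight (x + y) ^ 4 = 1 + (x + y) ^ 2 := weight_pow_four _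
    _ ≤ 2 * (1 + x ^ 2) * (1 + y ^ 2) := by nlinarith [sq_nonneg (x - y), sq_nonneg (x * y)]
    _ ≤ 16 * (√(1 + x ^ 2) ^ 2) ^ 2 * weight y ^ 4 := by
      rw [hw, weight_pow_four]
      nlinarith [sq_nonneg x, sq_nonneg y, mul_nonneg (sq_nonneg x) (sq_nonneg y)]
    _ = (2 * √(1 + x ^ 2) * weight y) ^ 4 := by ring

lemma abs_weight_add_sub_mul_le (x y : ℝ) :
    |weight (x + y) - weight y| * weight y ≤ 3 * (1 + x ^ 2) := by
  have hv := one_le_weight y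
  have hy := abs_le_weight_sq y
  have hx : |x| ≤ 1 + x ^ 2 := by nlinarith [sq_abs x, abs_nonneg x]
  refine le_of_mul_le_mul_right (a := weight y ^ 2) ?_ (by positivity)
  calc |weight (x + y) - weight y| * weight y * weight y ^ 2
      = |weight (x + y) - weight y| * weight y ^ 3 := by ring
    _ ≤ |weight (x + y) ^ 4 - weight y ^ 4| :=
      abs_sub_mul_pow_three_le (weight_nonneg _) (weight_nonneg _)
    _ = |x| * |x + 2 * y| := by
      rw [weight_pow_four, weight_pow_four, ← abs_mul]; ring_nf
    _ ≤ |x| * (|x| + 2 * weight y ^ 2) := by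
      gcongr; exact (abs_add_le _ _).trans (by rw [abs_mul, abs_two]; linarith)
    _ ≤ 3 * (1 + x ^ 2) * weight y ^ 2 := by
      nlinarith [sq_abs x, abs_nonneg x, pow_le_pow_left₀ zero_le_one hv 2]

lemma abs_weight_pow_mul_pow_sub_le (j k : ℕ) {β : ℝ} (hβ : 1 ≤ β) (σ : ℝ) :
    |weight (σ + β) ^ j * (σ + β) ^ k - weight β ^ j * β ^ k|
      ≤ 3 * (j + k) * 2 ^ (j + k) * weight β ^ j * β ^ k * ((weight β)⁻¹ + β⁻¹)
        * √(1 + σ ^ 2) ^ (j + k + 2) := by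
  set v := weight β
  set w := √(1 + σ ^ 2)
  have hv : 1 ≤ v := one_le_weight β
  have hw : 1 ≤ w := one_le_sqrt.2 (by nlinarith [sq_nonneg σ])
  have hσ : |σ| ≤ w := abs_le_sqrt (by linarith)
  have hβ₀ : 0 < β := by linarith
  have hv₀ : 0 < v := by linarith
  set p := weight (σ + β) / v
  set q := (σ + β) / β
  have hp : |p| ≤ 2 * w := by
    rw [abs_of_nonneg (div_nonneg (weight_nonneg _) hv₀.le), div_le_iff₀ hv₀]
    exact weight_add_le σ β
  have hq : |q| ≤ 2 * w := by
    rw [abs_div, abs_of_pos hβ₀, div_le_iff₀ hβ₀]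
    calc |σ + β| ≤ |σ| + β := (abs_add_le _ _).trans_eq (by rw [abs_of_pos hβ₀])
      _ ≤ 2 * w * β := by nlinarith
  have hp₁ : |p - 1| ≤ 3 * w ^ 2 * v⁻¹ := by
    have hdiff : |weight (σ + β) - v| ≤ 3 * w ^ 2 * v⁻¹ := by
      rw [sq_sqrt (by positivity), ← div_eq_mul_inv, le_div_iff₀ hv₀]
      exact abs_weight_add_sub_mul_le σ β
    rw [show p - 1 = (weight (σ + β) - v) * v⁻¹ by simp only [p]; field_simp, abs_mul,
      abs_of_pos (inv_pos.2 hv₀)]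
    calc |weight (σ + β) - v| * v⁻¹ ≤ 3 * w ^ 2 * v⁻¹ * v⁻¹ := by gcongr
      _ ≤ 3 * w ^ 2 * v⁻¹ := mul_le_of_le_one_right (by positivity) (inv_le_one_of_one_le₀ hv)
  have hq₁ : |q - 1| ≤ 3 * w ^ 2 * β⁻¹ := by
    rw [show q - 1 = σ * β⁻¹ by simp only [q]; field_simp; ring, abs_mul,
      abs_of_pos (inv_pos.2 hβ₀)]
    gcongr
    nlinarith
  have hfactor : weight (σ + β) ^ j * (σ + β) ^ k - v ^ j * β ^ k
      = v ^ j * β ^ k * (p ^ j * q ^ k - 1) := by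
    simp only [p, q, div_pow]; field_simp
  rw [hfactor, abs_mul, abs_of_nonneg (by positivity)]
  calc v ^ j * β ^ k * |p ^ j * q ^ k - 1|
      ≤ v ^ j * β ^ k
          * ((j + k) * (2 * w) ^ (j + k) * (3 * w ^ 2 * v⁻¹ + 3 * w ^ 2 * β⁻¹)) := by
        gcongr
        exact (abs_pow_mul_pow_sub_one_le hp hq (by linarith) j k).trans (by gcongr)
    _ = _ := by ring

/-- for `h(β) = (1+β²)^{1/4}` and `j, k : ℕ`, for large `β` one has
`|h(σ+β)^j(σ+β)^k − h(β)^jβ^k| ≤ C h(β)^j β^k (h(β)⁻¹ + β⁻¹)(1+σ²)^{(j+k+2)/2}`. -/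
theorem h_perturbation_estimate (j k : ℕ) :
    ∃ C > 0, ∃ β₀ > 0, ∀ β ≥ β₀, ∀ σ : ℝ,
      |((1 + (σ + β) ^ 2) ^ ((1 : ℝ) / 4)) ^ j * (σ + β) ^ k
          - ((1 + β ^ 2) ^ ((1 : ℝ) / 4)) ^ j * β ^ k|
        ≤ C * ((1 + β ^ 2) ^ ((1 : ℝ) / 4)) ^ j * β ^ k
            * (((1 + β ^ 2) ^ ((1 : ℝ) / 4))⁻¹ + β⁻¹)
            * (1 + σ ^ 2) ^ (((j : ℝ) + (k : ℝ) + 2) / 2) := by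
  refine ⟨3 * (j + k + 1) * 2 ^ (j + k), by positivity, 1, one_pos, fun β hβ σ => ?_⟩
  have hσ : (1 + σ ^ 2) ^ (((j : ℝ) + (k : ℝ) + 2) / 2) = √(1 + σ ^ 2) ^ (j + k + 2) := by
    rw [rpow_div_two_eq_sqrt _ (by positivity)]
    exact_mod_cast rpow_natCast _ (j + k + 2)
  rw [hσ]
  change |weight (σ + β) ^ j * (σ + β) ^ k - weight β ^ j * β ^ k|
    ≤ _ * weight β ^ j * β ^ k * ((weight β)⁻¹ + β⁻¹) * _
  have hβ₀ : 0 < β := one_pos.trans_le hβ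
  have hv := weight_nonneg β
  refine (abs_weight_pow_mul_pow_sub_le j k hβ σ).trans ?_
  gcongr 3 * ?_ * _ * _ * _ * _ * _
  linarith
end
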